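/- Let n ≥ 2 and let f be the rotation map f(x) = (x₁ cos θ − x₂ sin θ, x₂ cos θ + x₁ sin θ, x₃, …, xₙ) with θ = log(x₁² + x₂²). Then at every point x ≠ 0 with x₁² + x₂² > 0, the angular dilatation of f at x with respect to the origin equals 1: with A = f′(x) and u = x/|x|, one has D(A,u) = det A / ℓ(A,u)ⁿ = 1. -/

import Mathlib

open Metric

/-- The rotation map
`f(x) = (x₁ cos θ − x₂ sin θ, x₂ cos θ + x₁ sin θ, x₃, …, xₙ)` with
`θ = log (x₁² + x₂²)`. -/
noncomputable def rotMap (n : ℕ) (hn : 2 ≤ n)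
    (x : EuclideanSpace ℝ (Fin n)) : EuclideanSpace ℝ (Fin n) :=
  (WithLp.equiv 2 (Fin n → ℝ)).symm fun i =>
    let θ : ℝ := Real.log (x ⟨0, by omega⟩ ^ 2 + x ⟨1, by omega⟩ ^ 2)
    if (i : ℕ) = 0 then
      x ⟨0, by omega⟩ * Real.cos θ - x ⟨1, by omega⟩ * Real.sin θ
    else if (i : ℕ) = 1 then
      x ⟨1, by omega⟩ * Real.cos θ + x ⟨0, by omega⟩ * Real.sin θ
    else x i

/-- `ℓ(A,u) = inf { |A h| / |h ⬝ u| : |h| = 1, h ⬝ u ≠ 0 }`. -/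
noncomputable def ellDir (n : ℕ)
    (A : EuclideanSpace ℝ (Fin n) →L[ℝ] EuclideanSpace ℝ (Fin n))
    (u : EuclideanSpace ℝ (Fin n)) : ℝ :=
  sInf {r : ℝ | ∃ h : EuclideanSpace ℝ (Fin n),
    ‖h‖ = 1 ∧ (inner ℝ h u : ℝ) ≠ 0 ∧ r = ‖A h‖ / abs ((inner ℝ h u : ℝ))}

/-- Angular dilatation `D(A,u) = det A / ℓ(A,u)^n` (for `det A > 0`). -/
noncomputable def angDil (n : ℕ)
    (A : EuclideanSpace ℝ (Fin n) →L[ℝ] EuclideanSpace ℝ (Fin n))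
    (u : EuclideanSpace ℝ (Fin n)) : ℝ :=
  LinearMap.det (A : EuclideanSpace ℝ (Fin n) →ₗ[ℝ] EuclideanSpace ℝ (Fin n)) /
    (ellDir n A u) ^ n

/-!
On the plane of the first two coordinates, `f(z) = R(θ) z` with `θ = log |z|²` and `R` the
rotation matrix, while `f` is the identity on the remaining coordinates. By the product rule
`f'(x) = R(θ) (1 + N)` with `N h = (2 ⟪z, h⟫ / |z|²) J z`, `J` the quarter turn. Since
`⟪J z, z⟫ = 0`, the matrix `N` squares to zero and `Nᵀ z = 0`; hence `det f'(x) = 1`, and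
`⟪(1 + N) h, x⟫ = ⟪h, x⟫`. As `R(θ)` is orthogonal, Cauchy–Schwarz gives
`|f'(x) h| = |(1 + N) h| ≥ |⟪h, u⟫|` for `u = x / |x|`, with equality at `h = (1 - N) x`,
the preimage of `x` under `1 + N`. So `ℓ(f'(x), u) = 1` and `D(f'(x), u) = 1`.
-/

open Matrix Real
open scoped RealInnerProductSpace

section EllDir

variable {n : ℕ} {A : EuclideanSpace ℝ (Fin n) →L[ℝ] EuclideanSpace ℝ (Fin n)}
  {u : EuclideanSpace ℝ (Fin n)}

theorem ellDir_eq_of_forall_le {c : ℝ} (hle : ∀ h, c * |⟪h, u⟫| ≤ ‖A h‖)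
    {h₀ : EuclideanSpace ℝ (Fin n)} (hh₀ : ⟪h₀, u⟫ ≠ 0) (heq : ‖A h₀‖ = c * |⟪h₀, u⟫|) :
    ellDir n A u = c := by
  have hnorm : ‖h₀‖ ≠ 0 := fun h0 => hh₀ (by simp [norm_eq_zero.1 h0])
  refine IsLeast.csInf_eq ⟨⟨‖h₀‖⁻¹ • h₀, by simp [norm_smul, hnorm],
    by simp [inner_smul_left, hnorm, hh₀], ?_⟩, ?_⟩
  · rw [map_smul, norm_smul, inner_smul_left, heq, conj_trivial, abs_mul, norm_inv, norm_norm,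
      abs_inv, abs_norm]
    field_simp
  · rintro r ⟨h, -, hh, rfl⟩
    exact (le_div_iff₀ (abs_pos.2 hh)).2 (hle h)

theorem ellDir_eq_one {B : EuclideanSpace ℝ (Fin n) →L[ℝ] EuclideanSpace ℝ (Fin n)}
    (hu : ‖u‖ = 1) (hAB : ∀ h, ‖A h‖ = ‖B h‖) (hBu : B.adjoint u = u)
    {w : EuclideanSpace ℝ (Fin n)} (hw : B w = u) : ellDir n A u = 1 := by
  have hB : ∀ h, ⟪h, u⟫ = ⟪B h, u⟫ := fun h => by
    rw [← ContinuousLinearMap.adjoint_inner_right, hBu]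
  have hwu : ⟪w, u⟫ = 1 := by rw [hB, hw, real_inner_self_eq_norm_sq, hu, one_pow]
  refine ellDir_eq_of_forall_le (fun h => ?_) (h₀ := w) (by simp [hwu]) (by simp [hAB, hw, hu, hwu])
  calc 1 * |⟪h, u⟫| = |⟪B h, u⟫| := by rw [one_mul, hB]
    _ ≤ ‖B h‖ * ‖u‖ := abs_real_inner_le_norm _ _
    _ = ‖A h‖ := by rw [hu, mul_one, hAB]

end EllDir

def planeBlock (R : Type*) [CommRing R] [StarRing R] (m : ℕ) :
    Matrix (Fin 2) (Fin 2) R →⋆* Matrix (Fin (2 + m)) (Fin (2 + m)) R where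
  toFun M := reindex finSumFinEquiv finSumFinEquiv (fromBlocks M 0 0 1)
  map_one' := by simp
  map_mul' M M' := by simp [fromBlocks_multiply]
  map_star' M := by simp [star_eq_conjTranspose, fromBlocks_conjTranspose]

section PlaneBlock

variable {R : Type*} [CommRing R] [StarRing R] {m : ℕ} (M : Matrix (Fin 2) (Fin 2) R)

theorem det_planeBlock : (planeBlock R m M).det = M.det := by
  simp [planeBlock]

theorem planeBlock_mulVec_castAdd (v : Fin (2 + m) → R) (k : Fin 2) :
    (planeBlock R m M *ᵥ v) (Fin.castAdd m k) = (M *ᵥ fun k => v (Fin.castAdd m k)) k := by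
  simp [planeBlock, fromBlocks_mulVec, submatrix_mulVec_equiv]

theorem planeBlock_mulVec_natAdd (v : Fin (2 + m) → R) (j : Fin m) :
    (planeBlock R m M *ᵥ v) (Fin.natAdd 2 j) = v (Fin.natAdd 2 j) := by
  simp [planeBlock, fromBlocks_mulVec, submatrix_mulVec_equiv]

end PlaneBlock

noncomputable def planeBlockCLM (m : ℕ) : Matrix (Fin 2) (Fin 2) ℝ →⋆*
    (EuclideanSpace ℝ (Fin (2 + m)) →L[ℝ] EuclideanSpace ℝ (Fin (2 + m))) where
  toFun M := toEuclideanCLM (n := Fin (2 + m)) (𝕜 := ℝ) (planeBlock ℝ m M)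
  map_one' := by simp
  map_mul' M M' := by simp
  map_star' M := by rw [map_star (planeBlock ℝ m), map_star]

section PlaneBlockCLM

variable {m : ℕ} (M : Matrix (Fin 2) (Fin 2) ℝ) (v : EuclideanSpace ℝ (Fin (2 + m)))

theorem det_planeBlockCLM :
    LinearMap.det (planeBlockCLM m M : EuclideanSpace ℝ (Fin (2 + m)) →ₗ[ℝ] _) = M.det := by
  rw [← det_planeBlock (m := m)]
  exact LinearMap.det_toLin (PiLp.basisFun 2 ℝ (Fin (2 + m))) (planeBlock ℝ m M)

theorem planeBlockCLM_apply_castAdd (k : Fin 2) :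
    planeBlockCLM m M v (Fin.castAdd m k) = (M *ᵥ fun k => v (Fin.castAdd m k)) k :=
  planeBlock_mulVec_castAdd M v.ofLp k

theorem planeBlockCLM_apply_natAdd (j : Fin m) :
    planeBlockCLM m M v (Fin.natAdd 2 j) = v (Fin.natAdd 2 j) :=
  planeBlock_mulVec_natAdd M v.ofLp j

theorem planeBlockCLM_apply_eq_self
    (hM : (M *ᵥ fun k => v (Fin.castAdd m k)) = fun k => v (Fin.castAdd m k)) :
    planeBlockCLM m M v = v := by
  ext i
  refine Fin.addCases (fun k => ?_) (fun j => ?_) i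
  · rw [planeBlockCLM_apply_castAdd, hM]
  · rw [planeBlockCLM_apply_natAdd]

theorem norm_planeBlockCLM_of_mem_unitary (hM : M ∈ unitary (Matrix (Fin 2) (Fin 2) ℝ)) :
    ‖planeBlockCLM m M v‖ = ‖v‖ :=
  ContinuousLinearMap.norm_map_of_mem_unitary (Unitary.map_mem (planeBlockCLM m) hM) v

end PlaneBlockCLM

noncomputable def rotationMatrix (θ : ℝ) : Matrix (Fin 2) (Fin 2) ℝ :=
  !![cos θ, -sin θ; sin θ, cos θ]

theorem rotationMatrix_mem_unitary (θ : ℝ) :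
    rotationMatrix θ ∈ unitary (Matrix (Fin 2) (Fin 2) ℝ) := by
  rw [Matrix.mem_unitaryGroup_iff]
  ext i j
  fin_cases i <;> fin_cases j <;>
    simp [rotationMatrix, Matrix.mul_apply, Fin.sum_univ_two, ← sq, mul_comm]

theorem det_rotationMatrix (θ : ℝ) : (rotationMatrix θ).det = 1 := by
  simp [rotationMatrix, det_fin_two_of, ← sq]

def twistMatrix (p q : ℝ) : Matrix (Fin 2) (Fin 2) ℝ := vecMulVec ![-q, p] ![p, q]

theorem twistMatrix_mul_self (p q : ℝ) : twistMatrix p q * twistMatrix p q = 0 := by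
  ext i j
  fin_cases i <;> fin_cases j <;> simp [twistMatrix, Matrix.mul_apply] <;> ring

theorem transpose_twistMatrix_mulVec (p q : ℝ) : (twistMatrix p q)ᵀ *ᵥ ![p, q] = 0 := by
  ext i
  fin_cases i <;> simp [twistMatrix, mulVec, dotProduct] <;> ring

theorem det_one_add_smul_twistMatrix (c p q : ℝ) : (1 + c • twistMatrix p q).det = 1 := by
  simp [twistMatrix, det_fin_two]
  ring

theorem one_add_smul_twistMatrix_mul_one_sub (c p q : ℝ) :
    (1 + c • twistMatrix p q) * (1 - c • twistMatrix p q) = 1 := by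
  rw [← (Commute.one_left _).mul_self_sub_mul_self_eq, smul_mul_smul_comm, twistMatrix_mul_self]
  simp

noncomputable def spiralJacobian (p q : ℝ) : Matrix (Fin 2) (Fin 2) ℝ :=
  rotationMatrix (log (p ^ 2 + q ^ 2)) * (1 + (2 / (p ^ 2 + q ^ 2)) • twistMatrix p q)

theorem spiralJacobian_mulVec (p q : ℝ) (v : Fin 2 → ℝ) :
    spiralJacobian p q *ᵥ v = rotationMatrix (log (p ^ 2 + q ^ 2)) *ᵥ
      (v + (2 / (p ^ 2 + q ^ 2) * (p * v 0 + q * v 1)) • ![-q, p]) := by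
  rw [spiralJacobian, ← mulVec_mulVec, add_mulVec, one_mulVec, smul_mulVec, twistMatrix,
    vecMulVec_mulVec]
  congr 1
  ext i
  fin_cases i <;> simp [dotProduct, Fin.sum_univ_two] <;> ring

theorem det_spiralJacobian (p q : ℝ) : (spiralJacobian p q).det = 1 := by
  rw [spiralJacobian, det_mul, det_rotationMatrix, det_one_add_smul_twistMatrix, one_mul]

section RotMap

variable {m : ℕ} (hn : 2 ≤ 2 + m) (x : EuclideanSpace ℝ (Fin (2 + m)))

theorem rotMap_apply_natAdd (j : Fin m) :
    rotMap (2 + m) hn x (Fin.natAdd 2 j) = x (Fin.natAdd 2 j) := by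
  have h0 : (Fin.natAdd 2 j : ℕ) ≠ 0 := by simp
  have h1 : (Fin.natAdd 2 j : ℕ) ≠ 1 := by simp; omega
  simp only [rotMap, WithLp.equiv_symm_apply, h0, h1, if_false]

theorem hasFDerivAt_rotMap (hx : 0 < x (Fin.castAdd m 0) ^ 2 + x (Fin.castAdd m 1) ^ 2) :
    HasFDerivAt (rotMap (2 + m) hn)
      (planeBlockCLM m (spiralJacobian (x (Fin.castAdd m 0)) (x (Fin.castAdd m 1)))) x := by
  rw [← hasFDerivWithinAt_univ, hasFDerivWithinAt_piLp]
  intro i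
  rw [hasFDerivWithinAt_univ]
  have hp := PiLp.hasFDerivAt_apply (𝕜 := ℝ) (p := 2) x (Fin.castAdd m 0)
  have hq := PiLp.hasFDerivAt_apply (𝕜 := ℝ) (p := 2) x (Fin.castAdd m 1)
  have hθ := ((hp.pow 2).add (hq.pow 2)).log hx.ne'
  refine Fin.addCases (fun k => ?_) (fun j => ?_) i
  · fin_cases k
    · refine ((hp.mul hθ.cos).sub (hq.mul hθ.sin)).congr_fderiv ?_
      ext h
      simp only [ContinuousLinearMap.comp_apply, PiLp.proj_apply, planeBlockCLM_apply_castAdd,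
        spiralJacobian_mulVec]
      simp [rotationMatrix, mulVec, dotProduct, Fin.sum_univ_two]
      field_simp
      ring
    · refine ((hq.mul hθ.cos).add (hp.mul hθ.sin)).congr_fderiv ?_
      ext h
      simp only [ContinuousLinearMap.comp_apply, PiLp.proj_apply, planeBlockCLM_apply_castAdd,
        spiralJacobian_mulVec]
      simp [rotationMatrix, mulVec, dotProduct, Fin.sum_univ_two]
      field_simp
      ring
  · have hj := PiLp.hasFDerivAt_apply (𝕜 := ℝ) (p := 2) x (Fin.natAdd 2 j)
    refine (hj.congr_of_eventuallyEq (.of_forall fun y => rotMap_apply_natAdd hn y j)).congr_fderiv ?_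
    ext h
    simp [planeBlockCLM_apply_natAdd]

theorem ellDir_planeBlockCLM_spiralJacobian
    (hx : 0 < x (Fin.castAdd m 0) ^ 2 + x (Fin.castAdd m 1) ^ 2) :
    ellDir (2 + m) (planeBlockCLM m (spiralJacobian (x (Fin.castAdd m 0)) (x (Fin.castAdd m 1))))
      (‖x‖⁻¹ • x) = 1 := by
  set p := x (Fin.castAdd m 0)
  set q := x (Fin.castAdd m 1)
  set N := (2 / (p ^ 2 + q ^ 2)) • twistMatrix p q
  set u := ‖x‖⁻¹ • x
  have hx0 : x ≠ 0 := by
    rintro rfl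
    simp [p, q] at hx
  have hu : (fun k => u (Fin.castAdd m k)) = ‖x‖⁻¹ • ![p, q] := by
    ext k
    fin_cases k <;> simp [u, p, q]
  refine ellDir_eq_one (B := planeBlockCLM m (1 + N)) (norm_smul_inv_norm hx0) (fun h => ?_) ?_
    (w := planeBlockCLM m (1 - N) u) ?_
  · rw [spiralJacobian, map_mul, mul_apply_eq_comp,
      norm_planeBlockCLM_of_mem_unitary _ _ (rotationMatrix_mem_unitary _)]
  · rw [← ContinuousLinearMap.star_eq_adjoint, ← map_star]
    refine planeBlockCLM_apply_eq_self _ _ ?_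
    rw [hu, mulVec_smul, star_eq_conjTranspose, conjTranspose_eq_transpose_of_trivial,
      transpose_add, transpose_one, transpose_smul, add_mulVec, one_mulVec, smul_mulVec,
      transpose_twistMatrix_mulVec, smul_zero, add_zero]
  · rw [← mul_apply_eq_comp, ← map_mul, one_add_smul_twistMatrix_mul_one_sub, map_one,
      one_apply_eq_self]

end RotMap

theorem rotMap_angular_dilatation_one (n : ℕ) (hn : 2 ≤ n)
    (x : EuclideanSpace ℝ (Fin n))
    (hx : 0 < x ⟨0, by omega⟩ ^ 2 + x ⟨1, by omega⟩ ^ 2) :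
    angDil n (fderiv ℝ (rotMap n hn) x) (‖x‖⁻¹ • x) = 1 := by
  obtain ⟨m, rfl⟩ := Nat.exists_eq_add_of_le hn
  rw [angDil, (hasFDerivAt_rotMap hn x hx).fderiv, det_planeBlockCLM, det_spiralJacobian,
    ellDir_planeBlockCLM_spiralJacobian x hx, one_pow, div_one]
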